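/- arXiv:1309.5262 — 4 statements merged into one kernel-verified Lean document; each statement's English description precedes it below -/
import Mathlib

section
/- Let 0 < a < b be real numbers and ε > 0. For every real number t with a ≤ t ≤ b, max( Q((t−a)/(aε)), Q((b−t)/(bε)) ) ≥ Q((b−a)/((a+b)ε)), with equality if and only if t = 2ab/(a+b). Hence t = 2ab/(a+b) is the optimal quantization threshold for distinguishing runlengths a and b. -/
/-!
`Q` is strictly decreasing, so `t ↦ Q((t−a)/(aε))` strictly decreases and `t ↦ Q((b−t)/(bε))`
strictly increases. The two arguments agree exactly at `t = 2ab/(a+b)`, where both equal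
`(b−a)/((a+b)ε)`, and the maximum of a strictly decreasing and a strictly increasing function
is minimised exactly at their crossing point.
-/

/-- The standard Gaussian tail function `Q(x) = ∫_x^∞ (1/√(2π)) e^{−y²/2} dy`. -/
noncomputable def gaussQ (x : ℝ) : ℝ :=
  ∫ y in Set.Ioi x, (Real.sqrt (2 * Real.pi))⁻¹ * Real.exp (-(y ^ 2) / 2)

open MeasureTheory

section Crossing

variable {α β : Type*} [LinearOrder α] [LinearOrder β] {g h : α → β} {t₀ : α}

theorem lt_max_of_strictAnti_of_strictMono (hg : StrictAnti g) (hh : StrictMono h)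
    (hcross : g t₀ = h t₀) {t : α} (ht : t ≠ t₀) : g t₀ < max (g t) (h t) := by
  rcases ht.lt_or_gt with ht | ht
  · exact lt_max_of_lt_left (hg ht)
  · exact lt_max_of_lt_right (hcross ▸ hh ht)

theorem le_max_of_strictAnti_of_strictMono (hg : StrictAnti g) (hh : StrictMono h)
    (hcross : g t₀ = h t₀) (t : α) : g t₀ ≤ max (g t) (h t) := by
  rcases eq_or_ne t t₀ with rfl | ht
  · exact le_max_left _ _
  · exact (lt_max_of_strictAnti_of_strictMono hg hh hcross ht).le

theorem max_eq_iff_of_strictAnti_of_strictMono (hg : StrictAnti g) (hh : StrictMono h)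
    (hcross : g t₀ = h t₀) (t : α) : max (g t) (h t) = g t₀ ↔ t = t₀ := by
  refine ⟨fun heq => ?_, fun ht => by rw [ht, ← hcross, max_self]⟩
  by_contra ht
  exact (lt_max_of_strictAnti_of_strictMono hg hh hcross ht).ne' heq

end Crossing

theorem strictAnti_setIntegral_Ioi {f : ℝ → ℝ} (hf : Integrable f) (hpos : ∀ y, 0 < f y) :
    StrictAnti fun x => ∫ y in Set.Ioi x, f y := by
  intro x x' hxx'
  have hsplit : ∫ y in Set.Ioi x, f y = (∫ y in x..x', f y) + ∫ y in Set.Ioi x', f y := by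
    rw [intervalIntegral.integral_of_le hxx'.le, ← Set.Ioc_union_Ioi_eq_Ioi hxx'.le,
      setIntegral_union (Set.Ioc_disjoint_Ioi le_rfl) measurableSet_Ioi hf.integrableOn
        hf.integrableOn]
  have hmid : 0 < ∫ y in x..x', f y :=
    intervalIntegral.intervalIntegral_pos_of_pos hf.intervalIntegrable hpos hxx'
  linarith

theorem gaussQ_strictAnti : StrictAnti gaussQ := by
  refine strictAnti_setIntegral_Ioi ?_ fun y => by positivity
  convert (integrable_exp_neg_mul_sq (by norm_num : (0 : ℝ) < 1 / 2)).const_mul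
    (Real.sqrt (2 * Real.pi))⁻¹ using 2 with y
  ring_nf

theorem stmt1_general (a b ε : ℝ) (ha : 0 < a) (hab : a < b) (hε : 0 < ε)
    (t : ℝ) :
    gaussQ ((b - a) / ((a + b) * ε)) ≤
      max (gaussQ ((t - a) / (a * ε))) (gaussQ ((b - t) / (b * ε))) ∧
    (max (gaussQ ((t - a) / (a * ε))) (gaussQ ((b - t) / (b * ε)))
        = gaussQ ((b - a) / ((a + b) * ε)) ↔ t = 2 * a * b / (a + b)) := by
  have hb : 0 < b := ha.trans hab
  have hleft : (2 * a * b / (a + b) - a) / (a * ε) = (b - a) / ((a + b) * ε) := by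
    field_simp; ring
  have hright : (b - 2 * a * b / (a + b)) / (b * ε) = (b - a) / ((a + b) * ε) := by
    field_simp; ring
  have hg : StrictAnti fun s => gaussQ ((s - a) / (a * ε)) :=
    gaussQ_strictAnti.comp_strictMono fun s s' hss' => show _ / _ < _ / _ by gcongr
  have hh : StrictMono fun s => gaussQ ((b - s) / (b * ε)) :=
    gaussQ_strictAnti.comp fun s s' hss' => show _ / _ > _ / _ by gcongr
  have hcross : gaussQ ((2 * a * b / (a + b) - a) / (a * ε)) =
      gaussQ ((b - 2 * a * b / (a + b)) / (b * ε)) := by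
    rw [hleft, hright]
  rw [← hleft]
  exact ⟨le_max_of_strictAnti_of_strictMono hg hh hcross t,
    max_eq_iff_of_strictAnti_of_strictMono hg hh hcross t⟩

/-- For `0 < a < b`, `ε > 0` and any threshold `t ∈ [a,b]`, the worst-case decision error
`max(Q((t−a)/(aε)), Q((b−t)/(bε)))` is at least `Q((b−a)/((a+b)ε))`, with equality iff
`t = 2ab/(a+b)`; i.e. `t = 2ab/(a+b)` is the optimal quantization threshold. -/
theorem stmt1 (a b ε : ℝ) (ha : 0 < a) (hab : a < b) (hε : 0 < ε)
    (t : ℝ) (ht1 : a ≤ t) (ht2 : t ≤ b) :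
    gaussQ ((b - a) / ((a + b) * ε)) ≤
      max (gaussQ ((t - a) / (a * ε))) (gaussQ ((b - t) / (b * ε))) ∧
    (max (gaussQ ((t - a) / (a * ε))) (gaussQ ((b - t) / (b * ε)))
        = gaussQ ((b - a) / ((a + b) * ε)) ↔ t = 2 * a * b / (a + b)) :=
  stmt1_general a b ε ha hab hε t
end

section
/- For n ≥ 1 let N(n) be the number of binary strings of length n in which every maximal run of 0s has length 1 and every maximal run of 1s has length 1 or 2. Then (log₂ N(n))/n converges as n → ∞ to log₂ ρ, where ρ is the unique real root of x³ = x + 1 (ρ ≈ 1.3247, so the limit ≈ 0.406). This limit is the capacity of the RLL({1},{1,2}) constraint. -/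
/-!
A string satisfies the constraint iff it contains neither `00` nor `111` as a factor: every
interval on which the string is constant extends to a maximal run. Recording the last two symbols
of such strings gives a transfer matrix with characteristic polynomial `x³ - x - 1`, so
`N(n + 3) = N(n + 1) + N(n)` for `n ≥ 2`. The sequences `ρⁿ` and `2ρⁿ` satisfy the same
recurrence and bracket `N(n)` at `n = 2, 3, 4`, hence `ρⁿ ≤ N(n) ≤ 2ρⁿ` for all `n ≥ 2`, and
`log₂ N(n) / n → log₂ ρ`.
-/

/-- Positions `i ≤ j` form a maximal run of the binary string `s` of length `n`:
`s` is constant on `[i,j]`, either `i` is the first position or the preceding symbol differs,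
and either `j` is the last position or the following symbol differs. -/
def IsMaxRun {n : ℕ} (s : Fin n → Bool) (i j : Fin n) : Prop :=
  i ≤ j ∧ (∀ k : Fin n, i ≤ k → k ≤ j → s k = s i) ∧
    ((i : ℕ) = 0 ∨ ∃ i' : Fin n, (i' : ℕ) + 1 = (i : ℕ) ∧ s i' ≠ s i) ∧
    ((j : ℕ) = n - 1 ∨ ∃ j' : Fin n, (j : ℕ) + 1 = (j' : ℕ) ∧ s j' ≠ s j)

/-- The number of binary strings of length `n` in which every maximal run of `0`s has
length `1` and every maximal run of `1`s has length `1` or `2`, i.e. the strings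
satisfying the RLL({1},{1,2}) constraint. -/
noncomputable def N₀₁₂ (n : ℕ) : ℕ :=
  Nat.card {s : Fin n → Bool //
    ∀ i j : Fin n, IsMaxRun s i j →
      ((s i = false → (j : ℕ) - (i : ℕ) + 1 = 1) ∧
       (s i = true → ((j : ℕ) - (i : ℕ) + 1 = 1 ∨ (j : ℕ) - (i : ℕ) + 1 = 2)))}

theorem Fin.snoc_mk_of_lt {α : Type*} {m : ℕ} (t : Fin m → α) (c : α) {i : ℕ} (h : i < m + 1)
    (hi : i < m) : (Fin.snoc t c : Fin (m + 1) → α) ⟨i, h⟩ = t ⟨i, hi⟩ :=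
  Fin.snoc_castSucc (i := ⟨i, hi⟩) ..

theorem Nat.card_subtype_eq_sum_card_fiber {α β : Type*} [Finite α] [Fintype β] (P : α → Prop)
    (f : α → β) : Nat.card {x // P x} = ∑ b, Nat.card {x // P x ∧ f x = b} := by
  rw [← Nat.card_congr (Equiv.sigmaFiberEquiv fun x : {x // P x} => f x), Nat.card_sigma]
  exact Finset.sum_congr rfl fun b _ =>
    Nat.card_congr (Equiv.subtypeSubtypeEquivSubtypeInter P (fun x => f x = b))

theorem Nat.card_subtype_snoc {α : Type*} {m : ℕ} (P : (Fin (m + 1) → α) → Prop) (c : α) :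
    Nat.card {s // P s ∧ s (Fin.last m) = c} = Nat.card {t : Fin m → α // P (Fin.snoc t c)} :=
  Nat.card_congr
    { toFun s := ⟨Fin.init s.1, by simpa only [← s.2.2, Fin.snoc_init_self] using s.2.1⟩
      invFun t := ⟨Fin.snoc t.1 c, t.2, Fin.snoc_last ..⟩
      left_inv s := Subtype.ext (by simp only [← s.2.2, Fin.snoc_init_self])
      right_inv t := Subtype.ext (Fin.init_snoc (α := fun _ => α) c t.1) }

theorem le_of_padovan_recurrence {α : Type*} [Add α] [Preorder α] [AddLeftMono α]
    [AddRightMono α] {u v : ℕ → α} (hu : ∀ n, u (n + 3) ≤ u (n + 1) + u n)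
    (hv : ∀ n, v (n + 1) + v n ≤ v (n + 3)) (h₀ : u 0 ≤ v 0) (h₁ : u 1 ≤ v 1) (h₂ : u 2 ≤ v 2) :
    ∀ n, u n ≤ v n
  | 0 => h₀
  | 1 => h₁
  | 2 => h₂
  | n + 3 =>
    (hu n).trans <| (add_le_add (le_of_padovan_recurrence hu hv h₀ h₁ h₂ (n + 1))
      (le_of_padovan_recurrence hu hv h₀ h₁ h₂ n)).trans (hv n)

theorem pow_add_three_of_pow_three_eq {R : Type*} [Semiring R] {ρ : R} (hρ : ρ ^ 3 = ρ + 1)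
    (n : ℕ) : ρ ^ (n + 3) = ρ ^ (n + 1) + ρ ^ n := by
  rw [pow_add, hρ, mul_add, mul_one, ← pow_succ]

theorem Real.tendsto_log_div_of_le_of_le {x : ℕ → ℝ} {ρ c C : ℝ} (hρ : 0 < ρ) (hc : 0 < c)
    (hC : 0 < C) (hlo : ∀ᶠ n in Filter.atTop, c * ρ ^ n ≤ x n)
    (hhi : ∀ᶠ n in Filter.atTop, x n ≤ C * ρ ^ n) :
    Filter.Tendsto (fun n : ℕ => Real.log (x n) / n) Filter.atTop (nhds (Real.log ρ)) := by
  have log_bound (a : ℝ) (ha : 0 < a) (n : ℕ) :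
      Real.log (a * ρ ^ n) = Real.log a + n * Real.log ρ := by
    rw [Real.log_mul ha.ne' (pow_pos hρ n).ne', Real.log_pow]
  have squeeze (a : ℝ) :
      Filter.Tendsto (fun n : ℕ => (a + n * Real.log ρ) / n) Filter.atTop
        (nhds (Real.log ρ)) := by
    have := (tendsto_const_div_atTop_nhds_zero_nat a).add_const (Real.log ρ)
    rw [zero_add] at this
    refine this.congr' ?_
    filter_upwards [Filter.eventually_ge_atTop 1] with n hn
    have : (n : ℝ) ≠ 0 := by positivity
    field_simp
  refine tendsto_of_tendsto_of_tendsto_of_le_of_le' (squeeze (Real.log c)) (squeeze (Real.log C))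
    ?_ ?_
  · filter_upwards [hlo] with n hn
    rw [← log_bound c hc]
    gcongr
  · filter_upwards [hlo, hhi] with n hn hn'
    rw [← log_bound C hC]
    gcongr
    exact (by positivity : 0 < c * ρ ^ n).trans_le hn

def IsRLL012 {n : ℕ} (s : Fin n → Bool) : Prop :=
  ∀ i j : Fin n, IsMaxRun s i j →
    ((s i = false → (j : ℕ) - (i : ℕ) + 1 = 1) ∧
     (s i = true → ((j : ℕ) - (i : ℕ) + 1 = 1 ∨ (j : ℕ) - (i : ℕ) + 1 = 2)))

theorem exists_isMaxRun_of_constant {n : ℕ} (s : Fin n → Bool) (i j : Fin n) (hij : i ≤ j)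
    (hconst : ∀ k, i ≤ k → k ≤ j → s k = s i) : ∃ a b, IsMaxRun s a b ∧ a ≤ i ∧ j ≤ b := by
  by_cases hleft : (i : ℕ) = 0 ∨ ∃ i' : Fin n, (i' : ℕ) + 1 = i ∧ s i' ≠ s i
  · by_cases hright : (j : ℕ) = n - 1 ∨ ∃ j' : Fin n, (j : ℕ) + 1 = j' ∧ s j' ≠ s j
    · exact ⟨i, j, ⟨hij, hconst, hleft, hright⟩, le_rfl, le_rfl⟩
    · push Not at hright
      obtain ⟨hjn, hnext⟩ := hright
      have hj : (j : ℕ) + 1 < n := by omega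
      obtain ⟨a, b, hab, hai, hjb⟩ :=
        exists_isMaxRun_of_constant s i ⟨j + 1, hj⟩ (by simp only [Fin.le_def]; omega)
          fun k hik hkj => by
            obtain hkj | hkj : k ≤ j ∨ (k : ℕ) = j + 1 := by simp only [Fin.le_def] at hkj; omega
            · exact hconst k hik hkj
            · rw [← hconst j hij le_rfl, ← hnext k hkj.symm]
      exact ⟨a, b, hab, hai, by simp only [Fin.le_def] at hjb; omega⟩
  · push Not at hleft
    obtain ⟨hi0, hprev⟩ := hleft
    have hi : (i : ℕ) - 1 < n := by omega
    have hi' := hprev ⟨i - 1, hi⟩ (by dsimp only; omega)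
    obtain ⟨a, b, hab, hai, hjb⟩ :=
      exists_isMaxRun_of_constant s ⟨i - 1, hi⟩ j (by simp only [Fin.le_def]; omega)
        fun k hik hkj => by
          obtain hik | hik : i ≤ k ∨ (k : ℕ) = i - 1 := by simp only [Fin.le_def] at hik; omega
          · rw [hconst k hik hkj, hi']
          · rw [show k = ⟨i - 1, hi⟩ from Fin.ext hik]
    exact ⟨a, b, hab, by simp only [Fin.le_def] at hai; omega, hjb⟩
termination_by (i : ℕ) + (n - j)

def Avoids00And111 {n : ℕ} (s : Fin n → Bool) : Prop :=
  (∀ i (h : i + 1 < n), (s ⟨i, by omega⟩ || s ⟨i + 1, h⟩) = true) ∧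
  ∀ i (h : i + 2 < n), (s ⟨i, by omega⟩ && s ⟨i + 1, by omega⟩ && s ⟨i + 2, h⟩) = false

theorem IsRLL012.le_of_constant {n : ℕ} {s : Fin n → Bool} (hs : IsRLL012 s) {i j : ℕ}
    (hj : j < n) (hij : i ≤ j) (hconst : ∀ k (hk : k < n), i ≤ k → k ≤ j → s ⟨k, hk⟩ = s ⟨j, hj⟩) :
    (s ⟨j, hj⟩ = false → j = i) ∧ (s ⟨j, hj⟩ = true → j ≤ i + 1) := by
  obtain ⟨a, b, hab, hai, hjb⟩ := exists_isMaxRun_of_constant s ⟨i, by omega⟩ ⟨j, hj⟩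
    (by simp only [Fin.le_def, hij]) fun k hik hkj => by
      rw [hconst k k.2 hik hkj, hconst i (by omega) le_rfl hij]
  have hsa : s a = s ⟨j, hj⟩ := (hab.2.1 _ (hai.trans (by simp only [Fin.le_def, hij])) hjb).symm
  have hlen := hs a b hab
  rw [hsa] at hlen
  simp only [Fin.le_def] at hai hjb
  exact ⟨fun h => by have := hlen.1 h; omega, fun h => by have := hlen.2 h; omega⟩

theorem IsRLL012.avoids00And111 {n : ℕ} {s : Fin n → Bool} (hs : IsRLL012 s) :
    Avoids00And111 s := by
  constructor
  · intro i h
    by_contra hcon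
    simp only [Bool.or_eq_true, not_or, Bool.not_eq_true] at hcon
    have := (hs.le_of_constant h (Nat.le_succ i) fun k hk hik hkj => by
      obtain rfl | rfl : k = i ∨ k = i + 1 := by omega
      exacts [hcon.1.trans hcon.2.symm, rfl]).1 hcon.2
    omega
  · intro i h
    by_contra hcon
    simp only [Bool.and_eq_true, Bool.not_eq_false] at hcon
    have := (hs.le_of_constant (i := i) h (by omega) fun k hk hik hkj => by
      obtain rfl | rfl | rfl : k = i ∨ k = i + 1 ∨ k = i + 2 := by omega
      exacts [hcon.1.1.trans hcon.2.symm, hcon.1.2.trans hcon.2.symm, rfl]).2 hcon.2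
    omega

theorem Avoids00And111.isRLL012 {n : ℕ} {s : Fin n → Bool} (hs : Avoids00And111 s) :
    IsRLL012 s := by
  rintro i j ⟨-, hconst, -, -⟩
  have hrun (k : ℕ) (hk : k < n) (hik : i ≤ k) (hkj : k ≤ j) : s ⟨k, hk⟩ = s i :=
    hconst _ (by simp only [Fin.le_def]; omega) (by simp only [Fin.le_def]; omega)
  refine ⟨fun h => ?_, fun h => ?_⟩
  · by_contra hne
    have := hs.1 i (by omega)
    rw [hrun i (by omega) le_rfl (by omega), hrun (i + 1) (by omega) (by omega) (by omega), h]
      at this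
    simp at this
  · by_contra hne
    have := hs.2 i (by omega)
    rw [hrun i (by omega) le_rfl (by omega), hrun (i + 1) (by omega) (by omega) (by omega),
      hrun (i + 2) (by omega) (by omega) (by omega), h] at this
    simp at this

theorem isRLL012_iff_avoids00And111 {n : ℕ} (s : Fin n → Bool) :
    IsRLL012 s ↔ Avoids00And111 s :=
  ⟨IsRLL012.avoids00And111, Avoids00And111.isRLL012⟩

theorem N₀₁₂_eq_card_avoids00And111 (n : ℕ) :
    N₀₁₂ n = Nat.card {s : Fin n → Bool // Avoids00And111 s} :=
  Nat.card_congr (Equiv.subtypeEquivRight isRLL012_iff_avoids00And111)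

theorem avoids00And111_snoc {m : ℕ} (t : Fin (m + 2) → Bool) (c : Bool) :
    Avoids00And111 (Fin.snoc t c : Fin (m + 3) → Bool) ↔
      Avoids00And111 t ∧ (t ⟨m + 1, by omega⟩ || c) = true ∧
        (t ⟨m, by omega⟩ && t ⟨m + 1, by omega⟩ && c) = false := by
  have last : (Fin.snoc t c : Fin (m + 3) → Bool) ⟨m + 2, by omega⟩ = c := Fin.snoc_last ..
  constructor
  · rintro ⟨hpair, htriple⟩
    refine ⟨⟨fun i h => ?_, fun i h => ?_⟩, ?_, ?_⟩
    · have := hpair i (by omega)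
      rwa [Fin.snoc_mk_of_lt t c _ (by omega), Fin.snoc_mk_of_lt t c _ h] at this
    · have := htriple i (by omega)
      rwa [Fin.snoc_mk_of_lt t c _ (by omega), Fin.snoc_mk_of_lt t c _ (by omega),
        Fin.snoc_mk_of_lt t c _ h] at this
    · have := hpair (m + 1) (by omega)
      rwa [Fin.snoc_mk_of_lt t c _ (by omega), last] at this
    · have := htriple m (by omega)
      rwa [Fin.snoc_mk_of_lt t c _ (by omega), Fin.snoc_mk_of_lt t c _ (by omega), last] at this
  · rintro ⟨⟨hpair, htriple⟩, hlast_pair, hlast_triple⟩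
    constructor
    · intro i h
      obtain hi | rfl : i + 1 < m + 2 ∨ i = m + 1 := by omega
      · rw [Fin.snoc_mk_of_lt t c _ (by omega), Fin.snoc_mk_of_lt t c _ hi]
        exact hpair i hi
      · rwa [Fin.snoc_mk_of_lt t c _ (by omega), last]
    · intro i h
      obtain hi | rfl : i + 2 < m + 2 ∨ i = m := by omega
      · rw [Fin.snoc_mk_of_lt t c _ (by omega), Fin.snoc_mk_of_lt t c _ (by omega),
          Fin.snoc_mk_of_lt t c _ hi]
        exact htriple i hi
      · rwa [Fin.snoc_mk_of_lt t c _ (by omega), Fin.snoc_mk_of_lt t c _ (by omega), last]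

noncomputable def countEndingIn (m : ℕ) (a b : Bool) : ℕ :=
  Nat.card {s : Fin (m + 2) → Bool //
    Avoids00And111 s ∧ s ⟨m, by omega⟩ = a ∧ s ⟨m + 1, by omega⟩ = b}

theorem countEndingIn_zero (a b : Bool) :
    countEndingIn 0 a b = if (a || b) = true then 1 else 0 := by
  have avoids_iff (s : Fin 2 → Bool) : Avoids00And111 s ↔ (s 0 || s 1) = true := by
    refine ⟨fun h => h.1 0 (by omega), fun h => ⟨fun i hi => ?_, fun i hi => by omega⟩⟩
    obtain rfl : i = 0 := by omega
    exact h
  rw [countEndingIn, Nat.card_congr (Equiv.subtypeEquivRight fun s => by rw [avoids_iff]),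
    Nat.card_eq_fintype_card]
  revert a b
  decide

theorem countEndingIn_succ (m : ℕ) (b c : Bool) :
    countEndingIn (m + 1) b c =
      ∑ a, if (b || c) = true ∧ (a && b && c) = false then countEndingIn m a b else 0 := by
  have hsnoc := Nat.card_subtype_snoc
    (fun s : Fin (m + 3) → Bool => Avoids00And111 s ∧ s ⟨m + 1, by omega⟩ = b) c
  simp only [and_assoc, avoids00And111_snoc, Fin.snoc_mk_of_lt _ c _ (by omega : m + 1 < m + 2)]
    at hsnoc
  refine hsnoc.trans ?_
  clear hsnoc
  rw [Nat.card_subtype_eq_sum_card_fiber _ fun t => t ⟨m, by omega⟩]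
  refine Finset.sum_congr rfl fun a _ => ?_
  split_ifs with h
  · refine Nat.card_congr (Equiv.subtypeEquivRight fun t => ?_)
    constructor
    · rintro ⟨⟨ht, -, -, hb⟩, ha⟩
      exact ⟨ht, ha, hb⟩
    · rintro ⟨ht, ha, hb⟩
      rw [ha, hb]
      exact ⟨⟨ht, h.1, h.2, rfl⟩, rfl⟩
  · rw [Nat.card_eq_zero]
    left
    constructor
    rintro ⟨t, ⟨-, hbc, habc, hb⟩, ha⟩
    rw [hb] at hbc habc
    rw [ha] at habc
    exact h ⟨hbc, habc⟩

theorem N₀₁₂_add_two (m : ℕ) : N₀₁₂ (m + 2) = ∑ a, ∑ b, countEndingIn m a b := by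
  rw [N₀₁₂_eq_card_avoids00And111,
    Nat.card_subtype_eq_sum_card_fiber _ fun s => s ⟨m, by omega⟩]
  refine Finset.sum_congr rfl fun a _ => ?_
  rw [Nat.card_subtype_eq_sum_card_fiber _ fun s => s ⟨m + 1, by omega⟩]
  exact Finset.sum_congr rfl fun b _ =>
    Nat.card_congr (Equiv.subtypeEquivRight fun s => and_assoc)

theorem countEndingIn_false_false (m : ℕ) : countEndingIn m false false = 0 := by
  rw [countEndingIn, Nat.card_eq_zero]
  left
  constructor
  rintro ⟨s, ⟨hpair, -⟩, h₀, h₁⟩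
  simpa [h₀, h₁] using hpair m (by omega)

theorem countEndingIn_succ_false_true (m : ℕ) :
    countEndingIn (m + 1) false true = countEndingIn m true false := by
  simp [countEndingIn_succ, countEndingIn_false_false]

theorem countEndingIn_succ_true_false (m : ℕ) :
    countEndingIn (m + 1) true false = countEndingIn m true true + countEndingIn m false true := by
  simp [countEndingIn_succ]

theorem countEndingIn_succ_true_true (m : ℕ) :
    countEndingIn (m + 1) true true = countEndingIn m false true := by
  simp [countEndingIn_succ]

theorem N₀₁₂_add_five (m : ℕ) : N₀₁₂ (m + 5) = N₀₁₂ (m + 3) + N₀₁₂ (m + 2) := by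
  simp only [N₀₁₂_add_two, Fintype.sum_bool, countEndingIn_false_false,
    countEndingIn_succ_false_true, countEndingIn_succ_true_false, countEndingIn_succ_true_true]
  omega

theorem N₀₁₂_two : N₀₁₂ 2 = 3 := by
  simp only [N₀₁₂_add_two, Fintype.sum_bool, countEndingIn_zero]
  decide

theorem N₀₁₂_three : N₀₁₂ 3 = 4 := by
  simp only [N₀₁₂_add_two, Fintype.sum_bool, countEndingIn_false_false,
    countEndingIn_succ_false_true, countEndingIn_succ_true_false, countEndingIn_succ_true_true,
    countEndingIn_zero]
  decide

theorem N₀₁₂_four : N₀₁₂ 4 = 5 := by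
  simp only [N₀₁₂_add_two, Fintype.sum_bool, countEndingIn_false_false,
    countEndingIn_succ_false_true, countEndingIn_succ_true_false, countEndingIn_succ_true_true,
    countEndingIn_zero]
  decide

theorem lt_and_lt_of_pow_three_eq_add_one {ρ : ℝ} (hρ : ρ ^ 3 = ρ + 1) :
    13 / 10 < ρ ∧ ρ < 7 / 5 := by
  constructor
  · nlinarith [sq_nonneg (ρ - 13 / 10), sq_nonneg (ρ + 13 / 10), sq_nonneg (ρ ^ 2 - 1)]
  · nlinarith [sq_nonneg (ρ - 7 / 5), sq_nonneg (ρ + 7 / 5), sq_nonneg (ρ ^ 2 - 1)]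

theorem existsUnique_pow_three_eq_add_one : ∃! ρ : ℝ, ρ ^ 3 = ρ + 1 := by
  obtain ⟨ρ, -, hρ⟩ : ∃ ρ ∈ Set.Icc (1 : ℝ) 2, ρ ^ 3 - ρ = 1 :=
    intermediate_value_Icc (by norm_num) (by fun_prop) (by norm_num)
  refine ⟨ρ, by linarith, fun σ hσ => ?_⟩
  have hρ' := (lt_and_lt_of_pow_three_eq_add_one (ρ := ρ) (by linarith)).1
  have hσ' := (lt_and_lt_of_pow_three_eq_add_one hσ).1
  have : (σ - ρ) * (σ ^ 2 + σ * ρ + ρ ^ 2 - 1) = 0 := by linear_combination hσ - hρ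
  rcases mul_eq_zero.mp this with h | h
  · linarith
  · nlinarith

theorem pow_le_N₀₁₂_and_N₀₁₂_le {ρ : ℝ} (hρ : ρ ^ 3 = ρ + 1) {n : ℕ} (hn : 2 ≤ n) :
    ρ ^ n ≤ N₀₁₂ n ∧ (N₀₁₂ n : ℝ) ≤ 2 * ρ ^ n := by
  obtain ⟨hρ₁, hρ₂⟩ := lt_and_lt_of_pow_three_eq_add_one hρ
  have hρ₄ : ρ ^ 4 = ρ ^ 2 + ρ := by linear_combination ρ * hρ
  have pow_rec (k : ℕ) : ρ ^ (k + 1 + 2) + ρ ^ (k + 2) = ρ ^ (k + 3 + 2) :=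
    (pow_add_three_of_pow_three_eq hρ (k + 2)).symm
  have N_rec (k : ℕ) : (N₀₁₂ (k + 1 + 2) + N₀₁₂ (k + 2) : ℝ) = N₀₁₂ (k + 3 + 2) := by
    exact_mod_cast (N₀₁₂_add_five k).symm
  obtain ⟨m, rfl⟩ : ∃ m, n = m + 2 := ⟨n - 2, by omega⟩
  constructor
  · refine le_of_padovan_recurrence (u := fun k => ρ ^ (k + 2)) (v := fun k => (N₀₁₂ (k + 2) : ℝ))
      (fun k => (pow_rec k).ge) (fun k => (N_rec k).le) ?_ ?_ ?_ m
    all_goals norm_num [N₀₁₂_two, N₀₁₂_three, N₀₁₂_four]; nlinarith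
  · refine le_of_padovan_recurrence (u := fun k => (N₀₁₂ (k + 2) : ℝ))
      (v := fun k => 2 * ρ ^ (k + 2)) (fun k => (N_rec k).ge)
      (fun k => by rw [← pow_rec k, mul_add]) ?_ ?_ ?_ m
    all_goals norm_num [N₀₁₂_two, N₀₁₂_three, N₀₁₂_four]; nlinarith

/-- There is a unique real root `ρ` of `x³ = x + 1`, and `(log₂ N(n))/n` converges to
`log₂ ρ`, the capacity of the RLL({1},{1,2}) constraint. -/
theorem stmt12 :
    (∃! ρ : ℝ, ρ ^ 3 = ρ + 1) ∧
    ∀ ρ : ℝ, ρ ^ 3 = ρ + 1 →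
      Filter.Tendsto (fun n : ℕ => Real.logb 2 (N₀₁₂ n) / n) Filter.atTop
        (nhds (Real.logb 2 ρ)) := by
  refine ⟨existsUnique_pow_three_eq_add_one, fun ρ hρ => ?_⟩
  have hρ₀ : 0 < ρ := by linarith [(lt_and_lt_of_pow_three_eq_add_one hρ).1]
  have bounds := Filter.eventually_atTop.2 ⟨2, fun n hn => pow_le_N₀₁₂_and_N₀₁₂_le hρ hn⟩
  have := (Real.tendsto_log_div_of_le_of_le hρ₀ one_pos two_pos
    (bounds.mono fun n h => by rw [one_mul]; exact h.1) (bounds.mono fun n h => h.2)).div_const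
    (Real.log 2)
  simpa only [Real.logb, div_right_comm] using this
end

section
/- For n ≥ 1 let N(n) be the number of binary strings of length n in which every maximal run of 0s has length 1 and every maximal run of 1s has length 1 or 3. Then (log₂ N(n))/n converges as n → ∞ to (1/2)·log₂((1+√5)/2) (≈ 0.347); equivalently, the limit is log₂ λ where λ > 1 satisfies λ⁴ = λ² + 1. This limit is the capacity of the RLL({1},{1,3}) constraint. -/
/-- The number of binary strings of length `n` in which every maximal run of `0`s has
length `1` and every maximal run of `1`s has length `1` or `3`, i.e. the strings
satisfying the RLL({1},{1,3}) constraint. -/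
noncomputable def N₀₁₃ (n : ℕ) : ℕ :=
  Nat.card {s : Fin n → Bool //
    ∀ i j : Fin n, IsMaxRun s i j →
      ((s i = false → (j : ℕ) - (i : ℕ) + 1 = 1) ∧
       (s i = true → ((j : ℕ) - (i : ℕ) + 1 = 1 ∨ (j : ℕ) - (i : ℕ) + 1 = 3)))}

section Runs

variable {n : ℕ}

def IsRLL (L₀ L₁ : Set ℕ) (s : Fin n → Bool) : Prop :=
  ∀ i j : Fin n, IsMaxRun s i j → (j : ℕ) - i + 1 ∈ if s i then L₁ else L₀

lemma exists_runStart (s : Fin n → Bool) (p : Fin n) :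
    ∃ i ≤ p, (∀ k, i ≤ k → k ≤ p → s k = s p) ∧
      ((i : ℕ) = 0 ∨ ∃ i' : Fin n, (i' : ℕ) + 1 = i ∧ s i' ≠ s i) := by
  obtain ⟨p, hp⟩ := p
  induction p with
  | zero => exact ⟨⟨0, hp⟩, le_rfl, fun k h₁ h₂ => by rw [le_antisymm h₂ h₁], Or.inl rfl⟩
  | succ q ih =>
    by_cases hq : s ⟨q, by omega⟩ = s ⟨q + 1, hp⟩
    · obtain ⟨i, hi, hconst, hstart⟩ := ih (by omega)
      refine ⟨i, hi.trans (Fin.mk_le_mk.2 q.le_succ), fun k h₁ h₂ => ?_, hstart⟩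
      rcases (Fin.le_iff_val_le_val.1 h₂).lt_or_eq with h | h
      · exact (hconst k h₁ (Fin.mk_le_mk.2 (by simp at h; omega))).trans hq
      · rw [Fin.ext h]
    · exact ⟨⟨q + 1, hp⟩, le_rfl, fun k h₁ h₂ => by rw [le_antisymm h₂ h₁],
        Or.inr ⟨⟨q, by omega⟩, rfl, hq⟩⟩

lemma exists_runEnd (s : Fin n → Bool) (p : Fin n) :
    ∃ j, p ≤ j ∧ (∀ k, p ≤ k → k ≤ j → s k = s p) ∧
      ((j : ℕ) = n - 1 ∨ ∃ j' : Fin n, (j : ℕ) + 1 = j' ∧ s j' ≠ s j) := by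
  obtain ⟨p, hp⟩ := p
  induction h : n - 1 - p generalizing p with
  | zero =>
    exact ⟨⟨p, hp⟩, le_rfl, fun k h₁ h₂ => by rw [le_antisymm h₂ h₁], Or.inl (by simp; omega)⟩
  | succ d ih =>
    by_cases hq : s ⟨p + 1, by omega⟩ = s ⟨p, hp⟩
    · obtain ⟨j, hj, hconst, hend⟩ := ih (p + 1) (by omega) (by omega)
      refine ⟨j, (Fin.mk_le_mk.2 p.le_succ).trans hj, fun k h₁ h₂ => ?_, hend⟩
      rcases (Fin.le_iff_val_le_val.1 h₁).lt_or_eq with h | h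
      · exact (hconst k (Fin.mk_le_mk.2 (by simp at h; omega)) h₂).trans hq
      · rw [← Fin.ext h]
    · exact ⟨⟨p, hp⟩, le_rfl, fun k h₁ h₂ => by rw [le_antisymm h₂ h₁],
        Or.inr ⟨⟨p + 1, by omega⟩, rfl, hq⟩⟩

lemma exists_isMaxRun (s : Fin n → Bool) (p : Fin n) :
    ∃ i j, IsMaxRun s i j ∧ i ≤ p ∧ p ≤ j := by
  obtain ⟨i, hip, hi, hstart⟩ := exists_runStart s p
  obtain ⟨j, hpj, hj, hend⟩ := exists_runEnd s p
  have hsi : s i = s p := hi i le_rfl hip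
  refine ⟨i, j, ⟨hip.trans hpj, fun k h₁ h₂ => hsi ▸ ?_, hstart, hend⟩, hip, hpj⟩
  rcases le_total k p with h | h
  · exact hi k h₁ h
  · exact hj k h h₂

end Runs

section Append

variable {m n : ℕ} {s : Fin (m + 1) → Bool} {t : Fin (n + 1) → Bool}

lemma isMaxRun_append_castAdd_iff (hb : s (Fin.last m) ≠ t 0) {i j : Fin (m + 1)} :
    IsMaxRun (Fin.append s t) (Fin.castAdd _ i) (Fin.castAdd _ j) ↔ IsMaxRun s i j := by
  constructor
  · rintro ⟨hij, hconst, hstart, hend⟩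
    refine ⟨hij, fun k h₁ h₂ => ?_, ?_, ?_⟩
    · simpa using hconst (Fin.castAdd _ k) h₁ h₂
    · rcases hstart with h | ⟨i', hi', hne⟩
      · exact Or.inl h
      · induction i' using Fin.addCases with
        | left i' => exact Or.inr ⟨i', hi', by simpa using hne⟩
        | right i' => simp at hi'; omega
    · rcases hend with h | ⟨j', hj', hne⟩
      · simp at h; omega
      · induction j' using Fin.addCases with
        | left j' => exact Or.inr ⟨j', hj', by simpa using hne⟩
        | right j' => left; simp at hj' ⊢; omega
  · rintro ⟨hij, hconst, hstart, hend⟩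
    refine ⟨hij, fun k h₁ h₂ => ?_, ?_, ?_⟩
    · induction k using Fin.addCases with
      | left k => simpa using hconst k h₁ h₂
      | right k => simp [Fin.le_def] at h₂; omega
    · rcases hstart with h | ⟨i', hi', hne⟩
      · exact Or.inl h
      · exact Or.inr ⟨Fin.castAdd _ i', hi', by simpa using hne⟩
    · rcases hend with h | ⟨j', hj', hne⟩
      · refine Or.inr ⟨Fin.natAdd _ 0, by simp; omega, ?_⟩
        rw [Fin.append_right, Fin.append_left, show j = Fin.last m from Fin.ext (by simpa using h)]
        exact hb.symm
      · exact Or.inr ⟨Fin.castAdd _ j', hj', by simpa using hne⟩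

lemma isMaxRun_append_natAdd_iff (hb : s (Fin.last m) ≠ t 0) {i j : Fin (n + 1)} :
    IsMaxRun (Fin.append s t) (Fin.natAdd _ i) (Fin.natAdd _ j) ↔ IsMaxRun t i j := by
  constructor
  · rintro ⟨hij, hconst, hstart, hend⟩
    refine ⟨by simpa using hij, fun k h₁ h₂ => ?_, ?_, ?_⟩
    · simpa using hconst (Fin.natAdd _ k) (by simpa using h₁) (by simpa using h₂)
    · rcases hstart with h | ⟨i', hi', hne⟩
      · simp at h
      · induction i' using Fin.addCases with
        | left i' => left; simp at hi'; omega
        | right i' => exact Or.inr ⟨i', by simp at hi'; omega, by simpa using hne⟩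
    · rcases hend with h | ⟨j', hj', hne⟩
      · left; simp at h ⊢; omega
      · induction j' using Fin.addCases with
        | left j' => simp at hj'; omega
        | right j' => exact Or.inr ⟨j', by simp at hj'; omega, by simpa using hne⟩
  · rintro ⟨hij, hconst, hstart, hend⟩
    refine ⟨by simpa using hij, fun k h₁ h₂ => ?_, ?_, ?_⟩
    · induction k using Fin.addCases with
      | left k => simp [Fin.le_def] at h₁; omega
      | right k => simpa using hconst k (by simpa using h₁) (by simpa using h₂)
    · rcases hstart with h | ⟨i', hi', hne⟩
      · refine Or.inr ⟨Fin.castAdd _ (Fin.last m), by simp [h], ?_⟩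
        rw [Fin.append_right, Fin.append_left, show i = 0 from Fin.ext h]
        exact hb
      · exact Or.inr ⟨Fin.natAdd _ i', by simp [← hi']; omega, by simpa using hne⟩
    · rcases hend with h | ⟨j', hj', hne⟩
      · left; simp at h ⊢; omega
      · exact Or.inr ⟨Fin.natAdd _ j', by simp [← hj']; omega, by simpa using hne⟩

lemma not_isMaxRun_append_castAdd_natAdd (hb : s (Fin.last m) ≠ t 0) (i : Fin (m + 1))
    (j : Fin (n + 1)) : ¬ IsMaxRun (Fin.append s t) (Fin.castAdd _ i) (Fin.natAdd _ j) := by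
  rintro ⟨-, hconst, -, -⟩
  have hs := hconst (Fin.castAdd _ (Fin.last m)) (by simp [Fin.le_def]; omega)
    (by simp [Fin.le_def]; omega)
  have ht := hconst (Fin.natAdd _ 0) (by simp [Fin.le_def]) (by simp [Fin.le_def])
  exact hb (by simpa using hs.trans ht.symm)

lemma not_isMaxRun_append_natAdd_castAdd (i : Fin (n + 1)) (j : Fin (m + 1)) :
    ¬ IsMaxRun (Fin.append s t) (Fin.natAdd _ i) (Fin.castAdd _ j) := by
  rintro ⟨hij, -⟩
  simp [Fin.le_def] at hij
  omega

theorem isRLL_append_iff {L₀ L₁ : Set ℕ} (hb : s (Fin.last m) ≠ t 0) :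
    IsRLL L₀ L₁ (Fin.append s t) ↔ IsRLL L₀ L₁ s ∧ IsRLL L₀ L₁ t := by
  constructor
  · intro h
    refine ⟨fun i j hr => ?_, fun i j hr => ?_⟩
    · simpa using h _ _ ((isMaxRun_append_castAdd_iff hb).2 hr)
    · simpa [Nat.add_sub_add_left] using h _ _ ((isMaxRun_append_natAdd_iff hb).2 hr)
  · rintro ⟨hs, ht⟩ i j hr
    induction i using Fin.addCases with
    | left i =>
      induction j using Fin.addCases with
      | left j => simpa using hs i j ((isMaxRun_append_castAdd_iff hb).1 hr)
      | right j => exact absurd hr (not_isMaxRun_append_castAdd_natAdd hb i j)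
    | right i =>
      induction j using Fin.addCases with
      | left j => exact absurd hr (not_isMaxRun_append_natAdd_castAdd i j)
      | right j =>
        simpa [Nat.add_sub_add_left] using ht i j ((isMaxRun_append_natAdd_iff hb).1 hr)

end Append

section Count

variable {n : ℕ}

lemma isRLL_one_one_three_iff (s : Fin n → Bool) :
    IsRLL {1} {1, 3} s ↔ ∀ i j : Fin n, IsMaxRun s i j →
      ((s i = false → (j : ℕ) - (i : ℕ) + 1 = 1) ∧
       (s i = true → ((j : ℕ) - (i : ℕ) + 1 = 1 ∨ (j : ℕ) - (i : ℕ) + 1 = 3))) :=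
  forall₂_congr fun i j => imp_congr_right fun _ => by cases s i <;> simp

lemma N₀₁₃_eq_card (n : ℕ) : N₀₁₃ n = Nat.card {s : Fin n → Bool // IsRLL {1} {1, 3} s} :=
  Nat.card_congr (Equiv.subtypeEquivRight fun s => (isRLL_one_one_three_iff s).symm)

lemma IsRLL.exists_isMaxRun {L₀ L₁ : Set ℕ} {s : Fin n → Bool} (hs : IsRLL L₀ L₁ s)
    (p : Fin n) :
    ∃ i j, IsMaxRun s i j ∧ i ≤ p ∧ p ≤ j ∧ (j : ℕ) - i + 1 ∈ if s p then L₁ else L₀ := by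
  obtain ⟨i, j, hr, hip, hpj⟩ := _root_.exists_isMaxRun s p
  exact ⟨i, j, hr, hip, hpj, hr.2.1 p hip hpj ▸ hs i j hr⟩

lemma IsRLL.eq_true_of_succ_eq_false {L₁ : Set ℕ} {s : Fin n → Bool} (hs : IsRLL {1} L₁ s)
    {k : ℕ} (hk : k + 1 < n) (h : s ⟨k + 1, hk⟩ = false) : s ⟨k, by omega⟩ = true := by
  by_contra hk'
  obtain ⟨i, j, ⟨-, -, hstart, -⟩, hi, hj, hlen⟩ := hs.exists_isMaxRun ⟨k + 1, hk⟩
  simp only [h, Fin.le_def] at hi hj hlen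
  have hi : i = ⟨k + 1, hk⟩ := Fin.ext (by simp at hlen ⊢; omega)
  rcases hstart with h | ⟨i', hi', hne⟩
  · simp [hi] at h
  · rw [hi, show i' = ⟨k, by omega⟩ from Fin.ext (by simp [hi] at hi' ⊢; omega)] at hne
    simp_all

abbrev EndsFalse (n : ℕ) : Type :=
  {s : Fin (n + 1) → Bool // IsRLL {1} {1, 3} s ∧ s (Fin.last n) = false}

lemma endsFalse_tail (s : EndsFalse (n + 4)) :
    s.1 ⟨n + 3, by omega⟩ = true ∧
      (s.1 ⟨n + 2, by omega⟩ = false ∨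
        s.1 ⟨n + 2, by omega⟩ = true ∧ s.1 ⟨n + 1, by omega⟩ = true ∧
          s.1 ⟨n, by omega⟩ = false) := by
  obtain ⟨s, hs, hlast⟩ := s
  change s ⟨n + 4, by omega⟩ = false at hlast
  have h3 : s ⟨n + 3, by omega⟩ = true := hs.eq_true_of_succ_eq_false _ hlast
  refine ⟨h3, ?_⟩
  -- the maximal run through position `n + 3` is a run of `1`s ending there, of length 1 or 3
  obtain ⟨i, j, ⟨-, hconst, hstart, -⟩, hi, hj, hlen⟩ := hs.exists_isMaxRun ⟨n + 3, by omega⟩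
  have hsi : s i = true := (hconst _ hi hj).symm.trans h3
  simp only [h3, Fin.le_def] at hi hj hlen
  have hj : (j : ℕ) = n + 3 := by
    by_contra hj'
    have := hconst ⟨n + 4, by omega⟩ (by simp [Fin.le_def]; omega)
      (by simp [Fin.le_def]; omega)
    simp_all
  rcases hstart with h | ⟨i', hi', hne⟩
  · simp at hlen; omega
  rw [hsi] at hne
  simp at hlen
  rcases hlen with hlen | hlen
  · left
    rw [show i' = ⟨n + 2, by omega⟩ from Fin.ext (show (i' : ℕ) = n + 2 by omega)] at hne
    simpa using hne
  · right
    refine ⟨?_, ?_, ?_⟩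
    · exact (hconst _ (by simp [Fin.le_def]; omega) (by simp [Fin.le_def]; omega)).trans hsi
    · exact (hconst _ (by simp [Fin.le_def]; omega) (by simp [Fin.le_def]; omega)).trans hsi
    · rw [show i' = ⟨n, by omega⟩ from Fin.ext (show (i' : ℕ) = n by omega)] at hne
      simpa using hne

lemma isRLL_false : IsRLL {1} {1, 3} ![false] := by
  rw [isRLL_one_one_three_iff]; unfold IsMaxRun; decide

lemma isRLL_true_false : IsRLL {1} {1, 3} ![true, false] := by
  rw [isRLL_one_one_three_iff]; unfold IsMaxRun; decide

lemma isRLL_true_true_true_false : IsRLL {1} {1, 3} ![true, true, true, false] := by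
  rw [isRLL_one_one_three_iff]; unfold IsMaxRun; decide

def EndsFalse.append {k : ℕ} (b : Fin (k + 1) → Bool) (hb : IsRLL {1} {1, 3} b)
    (hb₀ : b 0 = true) (hbk : b (Fin.last k) = false) (s : EndsFalse n) :
    EndsFalse (n + 1 + k) :=
  ⟨Fin.append (m := n + 1) s.1 b,
    (isRLL_append_iff (by rw [s.2.2, hb₀]; decide)).2 ⟨s.2.1, hb⟩,
    by rw [← Fin.natAdd_last, Fin.append_right, hbk]⟩

lemma EndsFalse.append_injective {k : ℕ} (b : Fin (k + 1) → Bool) (hb : IsRLL {1} {1, 3} b)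
    (hb₀ : b 0 = true) (hbk : b (Fin.last k) = false) :
    Function.Injective (EndsFalse.append (n := n) b hb hb₀ hbk) := fun s t h =>
  Subtype.ext <| funext fun i => by
    simpa [EndsFalse.append] using congrFun (congrArg Subtype.val h) (Fin.castAdd (k + 1) i)

lemma EndsFalse.exists_append_eq {k : ℕ} (b : Fin (k + 1) → Bool) (hb : IsRLL {1} {1, 3} b)
    (hb₀ : b 0 = true) (hbk : b (Fin.last k) = false) (s : EndsFalse (n + 1 + k))
    (hcut : s.1 (Fin.castAdd (k + 1) (Fin.last n)) = false)
    (htail : ∀ i, s.1 (Fin.natAdd (n + 1) i) = b i) :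
    ∃ t, EndsFalse.append b hb hb₀ hbk t = s := by
  have hs : Fin.append (fun i => s.1 (Fin.castAdd (k + 1) i)) b = s.1 := by
    rw [← funext htail]
    exact Fin.append_castAdd_natAdd
  have hadm := s.2.1
  rw [← hs] at hadm
  exact ⟨⟨_, ((isRLL_append_iff (by rw [hcut, hb₀]; decide)).1 hadm).1, hcut⟩,
    Subtype.ext hs⟩

lemma card_endsFalse_add_four (n : ℕ) :
    Nat.card (EndsFalse (n + 4)) = Nat.card (EndsFalse (n + 2)) + Nat.card (EndsFalse n) := by
  rw [← Nat.card_sum]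
  refine (Nat.card_congr (Equiv.ofBijective (Sum.elim
    (EndsFalse.append (n := n + 2) (k := 1) ![true, false] isRLL_true_false rfl rfl)
    (EndsFalse.append (n := n) (k := 3) ![true, true, true, false]
      isRLL_true_true_true_false rfl rfl))
    ⟨?_, fun s => ?_⟩)).symm
  · refine (EndsFalse.append_injective ..).sumElim (EndsFalse.append_injective ..) fun s t h => ?_
    -- position `n + 2` carries the final `0` of the longer prefix, but a `1` of `1110`
    have h := congrFun (congrArg Subtype.val h) (Fin.castAdd 2 (Fin.last (n + 2)))
    change _ = Fin.append t.1 ![true, true, true, false] (Fin.natAdd (n + 1) 1) at h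
    simp [EndsFalse.append, s.2.2] at h
  · obtain ⟨h3, h2 | ⟨h2, h1, h0⟩⟩ := endsFalse_tail s
    · obtain ⟨t, ht⟩ := EndsFalse.exists_append_eq (n := n + 2) ![true, false]
        isRLL_true_false rfl rfl s h2 (Fin.forall_fin_two.2 ⟨h3, s.2.2⟩)
      exact ⟨Sum.inl t, ht⟩
    · obtain ⟨t, ht⟩ := EndsFalse.exists_append_eq (n := n) ![true, true, true, false]
        isRLL_true_true_true_false rfl rfl s h0
        (by intro i; fin_cases i; exacts [h1, h2, h3, s.2.2])
      exact ⟨Sum.inr t, ht⟩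

lemma nonempty_endsFalse : ∀ n, Nonempty (EndsFalse n)
  | 0 => ⟨⟨![false], isRLL_false, rfl⟩⟩
  | 1 => ⟨⟨![true, false], isRLL_true_false, rfl⟩⟩
  | n + 2 =>
    (nonempty_endsFalse n).map (EndsFalse.append (k := 1) ![true, false] isRLL_true_false rfl rfl)

lemma one_le_card_endsFalse (n : ℕ) : 1 ≤ Nat.card (EndsFalse n) :=
  have := nonempty_endsFalse n
  Nat.card_pos

lemma card_endsFalse_le (n : ℕ) : Nat.card (EndsFalse n) ≤ 2 ^ (n + 1) :=
  (Finite.card_subtype_le _).trans (by simp)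

lemma card_endsFalse_le_N₀₁₃ (n : ℕ) : Nat.card (EndsFalse n) ≤ N₀₁₃ (n + 1) :=
  N₀₁₃_eq_card _ ▸ Nat.card_le_card_of_injective (fun s => ⟨s.1, s.2.1⟩)
    fun _ _ h => Subtype.ext (Subtype.mk.inj h)

lemma N₀₁₃_le_card_endsFalse (n : ℕ) :
    N₀₁₃ (n + 1) ≤ Nat.card (EndsFalse n) + Nat.card (EndsFalse (n + 1)) := by
  rw [N₀₁₃_eq_card, ← Nat.card_sum]
  refine Nat.card_le_card_of_injective (fun s =>
    if h : s.1 (Fin.last n) = false then Sum.inl ⟨s.1, s.2, h⟩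
    else Sum.inr ⟨Fin.append s.1 ![false],
      (isRLL_append_iff (by simpa using h)).2 ⟨s.2, isRLL_false⟩, Fin.append_right _ _ 0⟩)
    fun s t hst => ?_
  by_cases hs : s.1 (Fin.last n) = false <;> by_cases ht : t.1 (Fin.last n) = false <;>
    simp [hs, ht] at hst
  · exact Subtype.ext hst
  · exact Subtype.ext <| funext fun i => by simpa using congrFun hst (Fin.castAdd 1 i)

end Count

section Growth

open Filter Topology Real
open scoped goldenRatio

lemma le_of_recurrence {u v : ℕ → ℝ} (hu : ∀ n, u (n + 4) = u (n + 2) + u n)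
    (hv : ∀ n, v (n + 4) = v (n + 2) + v n) (h : ∀ k < 4, u k ≤ v k) (n : ℕ) : u n ≤ v n := by
  induction n using Nat.strong_induction_on with
  | _ n ih =>
    by_cases hn : n < 4
    · exact h n hn
    · obtain ⟨m, rfl⟩ : ∃ m, n = m + 4 := ⟨n - 4, by omega⟩
      rw [hu, hv]
      exact add_le_add (ih _ (by omega)) (ih _ (by omega))

lemma mul_pow_add_four {μ : ℝ} (hμ : μ ^ 4 = μ ^ 2 + 1) (c : ℝ) (n : ℕ) :
    c * μ ^ (n + 4) = c * μ ^ (n + 2) + c * μ ^ n := by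
  rw [pow_add, pow_add, hμ]; ring

lemma sqrt_goldenRatio_pow_four : √φ ^ 4 = √φ ^ 2 + 1 := by
  rw [show 4 = 2 * 2 from rfl, pow_mul, sq_sqrt goldenRatio_pos.le, goldenRatio_sq]

lemma one_lt_sqrt_goldenRatio : 1 < √φ :=
  (lt_sqrt zero_le_one).2 (by simpa using one_lt_goldenRatio)

lemma card_endsFalse_bounds (n : ℕ) :
    1 / 3 * √φ ^ n ≤ Nat.card (EndsFalse n) ∧ (Nat.card (EndsFalse n) : ℝ) ≤ 16 * √φ ^ n := by
  have hrec (n : ℕ) : (Nat.card (EndsFalse (n + 4)) : ℝ) =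
      Nat.card (EndsFalse (n + 2)) + Nat.card (EndsFalse n) := by
    exact_mod_cast card_endsFalse_add_four n
  refine ⟨le_of_recurrence (u := fun n => 1 / 3 * √φ ^ n)
      (v := fun n => (Nat.card (EndsFalse n) : ℝ))
      (mul_pow_add_four sqrt_goldenRatio_pow_four _) hrec (fun k hk => ?_) n,
    le_of_recurrence (u := fun n => (Nat.card (EndsFalse n) : ℝ)) (v := fun n => 16 * √φ ^ n)
      hrec (mul_pow_add_four sqrt_goldenRatio_pow_four _) (fun k hk => ?_) n⟩
  · have h1 : (1 : ℝ) ≤ Nat.card (EndsFalse k) := by exact_mod_cast one_le_card_endsFalse k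
    have h3 : √φ ^ k ≤ 3 := calc
      √φ ^ k ≤ √φ ^ 4 := pow_le_pow_right₀ one_lt_sqrt_goldenRatio.le hk.le
      _ = φ + 1 := by rw [sqrt_goldenRatio_pow_four, sq_sqrt goldenRatio_pos.le]
      _ ≤ 3 := by linarith [goldenRatio_lt_two]
    linarith
  · have h16 : (Nat.card (EndsFalse k) : ℝ) ≤ 16 := by
      have := (card_endsFalse_le k).trans
        (Nat.pow_le_pow_right two_pos (show k + 1 ≤ 4 by omega))
      exact_mod_cast this
    nlinarith [one_le_pow₀ (n := k) one_lt_sqrt_goldenRatio.le]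

lemma N₀₁₃_bounds : ∀ᶠ n in atTop,
    1 / (3 * √φ) * √φ ^ n ≤ (N₀₁₃ n : ℝ) ∧ (N₀₁₃ n : ℝ) ≤ 32 * √φ ^ n := by
  filter_upwards [eventually_ge_atTop 1] with n hn
  obtain ⟨m, rfl⟩ : ∃ m, n = m + 1 := ⟨n - 1, by omega⟩
  have hμ := one_lt_sqrt_goldenRatio
  obtain ⟨hlow, hup⟩ := card_endsFalse_bounds m
  have hup' := (card_endsFalse_bounds (m + 1)).2
  have h₁ : (Nat.card (EndsFalse m) : ℝ) ≤ N₀₁₃ (m + 1) := by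
    exact_mod_cast card_endsFalse_le_N₀₁₃ m
  have h₂ : (N₀₁₃ (m + 1) : ℝ) ≤ Nat.card (EndsFalse m) + Nat.card (EndsFalse (m + 1)) := by
    exact_mod_cast N₀₁₃_le_card_endsFalse m
  have hpow : √φ ^ m ≤ √φ ^ (m + 1) := pow_le_pow_right₀ hμ.le m.le_succ
  constructor
  · calc 1 / (3 * √φ) * √φ ^ (m + 1) = 1 / 3 * √φ ^ m := by field_simp; ring
      _ ≤ _ := hlow.trans h₁
  · linarith

lemma tendsto_logb_div_of_le_of_le {b μ c C : ℝ} (hb : 1 < b) (hμ : 0 < μ) (hc : 0 < c)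
    {a : ℕ → ℝ} (h : ∀ᶠ n in atTop, c * μ ^ n ≤ a n ∧ a n ≤ C * μ ^ n) :
    Tendsto (fun n => logb b (a n) / n) atTop (𝓝 (logb b μ)) := by
  have hsplit {d : ℝ} (hd : 0 < d) {n : ℕ} (hn : 0 < n) :
      logb b (d * μ ^ n) / n = logb b d / n + logb b μ := by
    rw [logb_mul hd.ne' (pow_pos hμ n).ne', logb_pow]
    field_simp
  have hlim (d : ℝ) : Tendsto (fun n : ℕ => logb b d / n + logb b μ) atTop (𝓝 (logb b μ)) := by
    simpa using (tendsto_const_div_atTop_nhds_zero_nat (logb b d)).add_const (logb b μ)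
  refine tendsto_of_tendsto_of_tendsto_of_le_of_le' (hlim c) (hlim C) ?_ ?_
  all_goals filter_upwards [h, eventually_gt_atTop 0] with n ⟨hl, hu⟩ hn
  · rw [← hsplit hc hn]
    gcongr
  · have ha : 0 < a n := (mul_pos hc (pow_pos hμ n)).trans_le hl
    have hC : 0 < C := pos_of_mul_pos_left (ha.trans_le hu) (pow_pos hμ n).le
    rw [← hsplit hC hn]
    gcongr

lemma logb_eq_half_logb_goldenRatio {b lam : ℝ} (h : lam ^ 4 = lam ^ 2 + 1) :
    logb b lam = 1 / 2 * logb b φ := by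
  have hsq : lam ^ 2 = φ := by
    have hfac : (lam ^ 2 - φ) * (lam ^ 2 - ψ) = 0 := by
      linear_combination h - lam ^ 2 * goldenRatio_add_goldenConj + goldenRatio_mul_goldenConj
    rcases mul_eq_zero.1 hfac with h | h
    · linarith
    · nlinarith [goldenConj_neg]
  rw [← hsq, logb_pow]
  ring

end Growth

/-- `(log₂ N(n))/n` converges to `(1/2)·log₂((1+√5)/2)`, the capacity of the
RLL({1},{1,3}) constraint; equivalently the limit is `log₂ λ` for the `λ > 1` with
`λ⁴ = λ² + 1`. -/
theorem stmt13 :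
    Filter.Tendsto (fun n : ℕ => Real.logb 2 (N₀₁₃ n) / n) Filter.atTop
      (nhds ((1 / 2) * Real.logb 2 ((1 + Real.sqrt 5) / 2))) ∧
    ∀ lam : ℝ, 1 < lam → lam ^ 4 = lam ^ 2 + 1 →
      Real.logb 2 lam = (1 / 2) * Real.logb 2 ((1 + Real.sqrt 5) / 2) := by
  refine ⟨?_, fun lam _ => logb_eq_half_logb_goldenRatio⟩
  rw [← logb_eq_half_logb_goldenRatio sqrt_goldenRatio_pow_four]
  exact tendsto_logb_div_of_le_of_le one_lt_two (by positivity) (by positivity) N₀₁₃_bounds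
end

section
/- With p(L) = Q(1/(2Lε)), the ratio p(2)²/p(1) = Q(1/(4ε))² / Q(1/(2ε)) tends to +∞ as ε → 0⁺. In particular, for all sufficiently small ε > 0 one has p(2)² > p(1); i.e., a scheme whose frame error rate behaves like p(2)² is asymptotically worse than one behaving like p(1). -/
open Real MeasureTheory ProbabilityTheory Set Filter Topology

local notation "φ" => gaussianPDFReal 0 1

lemma gaussianPDFReal_zero_one (y : ℝ) : φ y = (√(2 * π))⁻¹ * exp (-(y ^ 2) / 2) := by
  simp [gaussianPDFReal]

lemma gaussQ_eq_integral_gaussianPDFReal (x : ℝ) : gaussQ x = ∫ y in Ioi x, φ y := by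
  simp only [gaussQ, gaussianPDFReal_zero_one]

lemma hasDerivAt_gaussianPDFReal_zero_one (y : ℝ) : HasDerivAt φ (-(y * φ y)) y := by
  have hq : HasDerivAt (fun z : ℝ => -(z ^ 2) / 2) (-y) y :=
    (((hasDerivAt_id y).pow 2).neg.div_const 2).congr_deriv (by simp; ring)
  rw [funext gaussianPDFReal_zero_one]
  exact (hq.exp.const_mul (√(2 * π))⁻¹).congr_deriv (by ring)

lemma tendsto_gaussianPDFReal_zero_one_atTop : Tendsto φ atTop (𝓝 0) := by
  have h : Tendsto (fun y : ℝ => -(y ^ 2) / 2) atTop atBot :=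
    (tendsto_neg_atTop_atBot.comp (tendsto_pow_atTop two_ne_zero)).atBot_div_const two_pos
  simpa [funext gaussianPDFReal_zero_one] using (tendsto_exp_atBot.comp h).const_mul (√(2 * π))⁻¹

lemma integrable_mul_gaussianPDFReal_zero_one : Integrable fun y => y * φ y := by
  have h := (integrable_mul_exp_neg_mul_sq (b := 1 / 2) (by norm_num)).const_mul (√(2 * π))⁻¹
  refine h.congr (ae_of_all _ fun y => ?_)
  simp only [gaussianPDFReal_zero_one]; ring_nf

lemma integral_Ioi_mul_gaussianPDFReal_zero_one (x : ℝ) : ∫ y in Ioi x, y * φ y = φ x := by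
  have h := integral_Ioi_of_hasDerivAt_of_tendsto' (f := fun y => -φ y) (a := x) (m := 0)
    (fun y _ => (hasDerivAt_gaussianPDFReal_zero_one y).neg)
    (by simpa using integrable_mul_gaussianPDFReal_zero_one.integrableOn)
    (by simpa using tendsto_gaussianPDFReal_zero_one_atTop.neg)
  simpa using h

lemma antitoneOn_gaussianPDFReal_zero_one : AntitoneOn φ (Ici 0) := by
  intro x hx y _ hxy
  simp only [gaussianPDFReal_zero_one]
  gcongr

lemma gaussianPDFReal_le_gaussQ {x : ℝ} (hx : 0 ≤ x) : φ (x + 1) ≤ gaussQ x := by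
  rw [gaussQ_eq_integral_gaussianPDFReal]
  calc φ (x + 1) = ∫ _ in Ioc x (x + 1), φ (x + 1) := by simp
    _ ≤ ∫ y in Ioc x (x + 1), φ y :=
      setIntegral_mono_on (integrableOn_const (by simp)) (integrable_gaussianPDFReal 0 1).integrableOn
        measurableSet_Ioc fun y hy => antitoneOn_gaussianPDFReal_zero_one (hx.trans hy.1.le) (by simp; linarith) hy.2
    _ ≤ ∫ y in Ioi x, φ y :=
      setIntegral_mono_set (integrable_gaussianPDFReal 0 1).integrableOn
        (ae_of_all _ fun _ => gaussianPDFReal_nonneg 0 1 _) Ioc_subset_Ioi_self.eventuallyLE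

lemma gaussQ_pos {x : ℝ} (hx : 0 ≤ x) : 0 < gaussQ x :=
  (gaussianPDFReal_pos 0 1 _ one_ne_zero).trans_le (gaussianPDFReal_le_gaussQ hx)

lemma gaussQ_le_div {x : ℝ} (hx : 0 < x) : gaussQ x ≤ φ x / x := by
  rw [gaussQ_eq_integral_gaussianPDFReal, ← integral_Ioi_mul_gaussianPDFReal_zero_one,
    ← integral_div]
  refine setIntegral_mono_on (integrable_gaussianPDFReal 0 1).integrableOn
    (integrable_mul_gaussianPDFReal_zero_one.div_const x).integrableOn measurableSet_Ioi
    fun y (hy : x < y) => ?_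
  rw [le_div_iff₀ hx, mul_comm]
  exact mul_le_mul_of_nonneg_right hy.le (gaussianPDFReal_nonneg 0 1 y)

lemma gaussianPDFReal_zero_one_sq_div (a b : ℝ) :
    φ a ^ 2 / φ b = (√(2 * π))⁻¹ * exp (b ^ 2 / 2 - a ^ 2) := by
  simp only [gaussianPDFReal_zero_one]
  field_simp
  rw [← exp_add, ← exp_nat_mul]
  congr 1; push_cast; ring

lemma mul_gaussianPDFReal_sq_div_le_gaussQ_sq_div {x : ℝ} (hx : 0 < x) :
    2 * x * (φ (x + 1) ^ 2 / φ (2 * x)) ≤ gaussQ x ^ 2 / gaussQ (2 * x) := by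
  calc 2 * x * (φ (x + 1) ^ 2 / φ (2 * x)) = φ (x + 1) ^ 2 / (φ (2 * x) / (2 * x)) := by
        field_simp
    _ ≤ gaussQ x ^ 2 / gaussQ (2 * x) := by
        gcongr
        · exact gaussQ_pos (by positivity)
        · exact gaussianPDFReal_nonneg 0 1 _
        · exact gaussianPDFReal_le_gaussQ hx.le
        · exact gaussQ_le_div (by positivity)

lemma tendsto_gaussQ_sq_div_gaussQ_two_mul :
    Tendsto (fun x => gaussQ x ^ 2 / gaussQ (2 * x)) atTop atTop := by
  have hexp : Tendsto (fun x : ℝ => exp ((2 * x) ^ 2 / 2 - (x + 1) ^ 2)) atTop atTop := by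
    refine tendsto_exp_atTop.comp (tendsto_atTop_mono' _ ?_ tendsto_id)
    filter_upwards [eventually_ge_atTop 4] with x hx
    simp only [id]
    nlinarith
  have hlow : Tendsto (fun x : ℝ => 2 * x * (φ (x + 1) ^ 2 / φ (2 * x))) atTop atTop := by
    simp only [gaussianPDFReal_zero_one_sq_div]
    exact (tendsto_id.const_mul_atTop two_pos).atTop_mul_atTop₀
      (hexp.const_mul_atTop (by positivity))
  refine tendsto_atTop_mono' _ ?_ hlow
  filter_upwards [eventually_gt_atTop 0] with x hx
  exact mul_gaussianPDFReal_sq_div_le_gaussQ_sq_div hx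

/-- With `p(L) = Q(1/(2Lε))`, the ratio `p(2)²/p(1) = Q(1/(4ε))²/Q(1/(2ε))` tends to `+∞` as
`ε → 0⁺`; in particular `p(2)² > p(1)` for all sufficiently small `ε > 0`. -/
theorem stmt15 :
    Filter.Tendsto (fun ε : ℝ => gaussQ (1 / (4 * ε)) ^ 2 / gaussQ (1 / (2 * ε)))
      (nhdsWithin 0 (Set.Ioi 0)) Filter.atTop ∧
    ∃ ε₀ > (0 : ℝ), ∀ ε : ℝ, 0 < ε → ε < ε₀ →
      gaussQ (1 / (2 * ε)) < gaussQ (1 / (4 * ε)) ^ 2 := by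
  have hx : Tendsto (fun ε : ℝ => 1 / (4 * ε)) (𝓝[>] 0) atTop :=
    (tendsto_inv_nhdsGT_zero.atTop_div_const (by norm_num : (0 : ℝ) < 4)).congr fun ε => by ring
  have hratio : Tendsto (fun ε : ℝ => gaussQ (1 / (4 * ε)) ^ 2 / gaussQ (1 / (2 * ε)))
      (𝓝[>] 0) atTop :=
    (tendsto_gaussQ_sq_div_gaussQ_two_mul.comp hx).congr fun ε => by
      simp only [Function.comp, show 2 * (1 / (4 * ε)) = 1 / (2 * ε) by ring]
  refine ⟨hratio, ?_⟩
  obtain ⟨ε₀, hε₀, hgt⟩ := (nhdsGT_basis (0 : ℝ)).eventually_iff.1 (hratio.eventually_gt_atTop 1)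
  exact ⟨ε₀, hε₀, fun ε hε hεε₀ =>
    (one_lt_div (gaussQ_pos (by positivity))).1 (hgt ⟨hε, hεε₀⟩)⟩
end
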